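/- The function f^♯ : ℝ × [0,∞) → ℝ given by f^♯(x,a) = 1 + a if x ≤ 0 or (x > 0, 0 ≤ a < 1/(2x)); f^♯(x,a) = (2x+1)(1/x − a) if x > 0, 1/(2x) ≤ a ≤ 1/x; f^♯(x,a) = a − 1/x if x > 0, a > 1/x, is continuous but not K-inf-compact on ℝ × [0,∞): the sequence (x_n, a_n) = (1/n, n) satisfies x_n → 0, f^♯(x_n, a_n) = 0 for all n, yet {a_n} has no convergent subsequence. -/
import Mathlib

open Filter Topology

noncomputable def fSharp (x a : ℝ) : ℝ :=
  if x ≤ 0 then 1 + a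
  else if a < 1 / (2 * x) then 1 + a
  else if a ≤ 1 / x then (2 * x + 1) * (1 / x - a)
  else a - 1 / x

lemma fSharp_eq_max (x a : ℝ) (hx : 0 < x) :
    fSharp x a = max (min (1 + a) ((2 * x + 1) * (1 / x - a))) (a - 1 / x) := by
  have hu : x * (1 / x) = 1 := mul_one_div_cancel hx.ne'
  have h12 : (1 : ℝ) / (2 * x) = (1 / x) / 2 := by rw [div_div, mul_comm]
  unfold fSharp
  rw [if_neg (not_le.2 hx), h12]
  split_ifs with h1 h2
  · rw [min_eq_left, max_eq_left] <;> nlinarith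
  · rw [min_eq_right, max_eq_left] <;> nlinarith
  · rw [min_eq_right, max_eq_right] <;> nlinarith

lemma fSharp_contAt_pos (p : ℝ × ℝ) (hx : 0 < p.1) :
    ContinuousAt (fun p : ℝ × ℝ => fSharp p.1 p.2) p := by
  have hne : p.1 ≠ 0 := hx.ne'
  have hc : ContinuousAt
      (fun q : ℝ × ℝ => max (min (1 + q.2) ((2 * q.1 + 1) * (1 / q.1 - q.2)))
        (q.2 - 1 / q.1)) p := by
    have hinv : ContinuousAt (fun q : ℝ × ℝ => 1 / q.1) p :=
      continuousAt_const.div continuous_fst.continuousAt hne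
    exact (((continuousAt_const.add continuous_snd.continuousAt)).min
      (((continuous_const.mul continuous_fst).add continuous_const).continuousAt.mul
        (hinv.sub continuous_snd.continuousAt))).max
      (continuous_snd.continuousAt.sub hinv)
  apply hc.congr
  have hU : {q : ℝ × ℝ | 0 < q.1} ∈ 𝓝 p :=
    (isOpen_lt continuous_const continuous_fst).mem_nhds hx
  exact Filter.eventuallyEq_of_mem hU fun q hq => (fSharp_eq_max q.1 q.2 hq).symm

lemma fSharp_contAt_nonpos (p : ℝ × ℝ) (hx : p.1 ≤ 0) (ha : 0 ≤ p.2) :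
    ContinuousAt (fun p : ℝ × ℝ => fSharp p.1 p.2) p := by
  set ε : ℝ := 1 / (2 * (p.2 + 1)) with hε
  have hεpos : 0 < ε := by positivity
  have hc : ContinuousAt (fun q : ℝ × ℝ => 1 + q.2) p :=
    continuousAt_const.add continuous_snd.continuousAt
  apply hc.congr
  have hU : {q : ℝ × ℝ | q.1 < ε ∧ q.2 < p.2 + 1} ∈ 𝓝 p := by
    exact ((isOpen_lt continuous_fst continuous_const).inter
      (isOpen_lt continuous_snd continuous_const)).mem_nhds
      ⟨lt_of_le_of_lt hx hεpos, by exact lt_add_one p.2⟩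
  refine Filter.eventuallyEq_of_mem hU fun q hq => ?_
  obtain ⟨h1, h2⟩ := hq
  unfold fSharp
  by_cases hq1 : q.1 ≤ 0
  · rw [if_pos hq1]
  · push_neg at hq1
    have hlt : q.2 < 1 / (2 * q.1) := by
      rw [lt_div_iff₀ (by positivity)]
      have hεe : (p.2 + 1) * (2 * ε) = 1 := by
        rw [hε]; field_simp
      nlinarith
    rw [if_neg (not_le.2 hq1), if_pos hlt]

/-- The worst-loss function `f♯` of the example is continuous on `ℝ × [0, ∞)` but
not `K`-inf-compact there: along `(x_n, a_n) = (1/n, n)` we have `x_n → 0`,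
`f♯(x_n, a_n) = 0`, while `{a_n}` has no convergent subsequence. -/
theorem fSharp_continuous_not_kInfCompact :
    ContinuousOn (fun p : ℝ × ℝ => fSharp p.1 p.2)
      (Set.univ ×ˢ Set.Ici (0 : ℝ)) ∧
    (∀ n : ℕ, 1 ≤ n → fSharp (1 / (n : ℝ)) (n : ℝ) = 0) ∧
    ¬ (∀ C : Set ℝ, C.Nonempty → IsCompact C → ∀ lam : ℝ,
        IsCompact {p : ℝ × ℝ | p.1 ∈ C ∧ p.2 ∈ Set.Ici (0 : ℝ) ∧
          fSharp p.1 p.2 ≤ lam}) := by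
  have key : ∀ n : ℕ, 1 ≤ n → fSharp (1 / (n : ℝ)) (n : ℝ) = 0 := by
    intro n hn
    have hn' : (1 : ℝ) ≤ (n : ℝ) := by exact_mod_cast hn
    have hnpos : (0 : ℝ) < n := by linarith
    have hxpos : (0 : ℝ) < 1 / (n : ℝ) := by positivity
    have hinv : (1 : ℝ) / (1 / (n : ℝ)) = (n : ℝ) := one_div_one_div _
    unfold fSharp
    rw [if_neg (not_le.2 hxpos)]
    have h1 : ¬ ((n : ℝ) < 1 / (2 * (1 / (n : ℝ)))) := by
      rw [not_lt]
      have : (1 : ℝ) / (2 * (1 / (n : ℝ))) = (n : ℝ) / 2 := by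
        field_simp
      rw [this]; linarith
    rw [if_neg h1, if_pos (by rw [hinv]), hinv, sub_self, mul_zero]
  refine ⟨?_, key, ?_⟩
  · intro p hp
    obtain ⟨-, ha⟩ := hp
    by_cases hx : 0 < p.1
    · exact (fSharp_contAt_pos p hx).continuousWithinAt
    · exact (fSharp_contAt_nonpos p (not_lt.1 hx) ha).continuousWithinAt
  · intro h
    have hcomp := h (Set.Icc 0 1) ⟨0, by simp⟩ isCompact_Icc 0
    obtain ⟨M, hM⟩ := (Metric.isBounded_iff_subset_closedBall 0).1 hcomp.isBounded
    obtain ⟨n, hn⟩ := exists_nat_gt (max M 1)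
    have hn1 : 1 ≤ n := by
      have : (1 : ℝ) < n := lt_of_le_of_lt (le_max_right M 1) hn
      exact_mod_cast this.le
    have hn' : (1 : ℝ) ≤ (n : ℝ) := by exact_mod_cast hn1
    have hmem : ((1 / (n : ℝ), (n : ℝ)) : ℝ × ℝ) ∈
        {p : ℝ × ℝ | p.1 ∈ Set.Icc (0:ℝ) 1 ∧ p.2 ∈ Set.Ici (0 : ℝ) ∧
          fSharp p.1 p.2 ≤ 0} := by
      refine ⟨⟨by positivity, ?_⟩, Set.mem_Ici.2 (by linarith), le_of_eq (key n hn1)⟩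
      rw [div_le_one (by linarith)]; linarith
    have := hM hmem
    rw [Metric.mem_closedBall, dist_zero_right] at this
    have hle : (n : ℝ) ≤ M := by
      calc (n : ℝ) = ‖(n : ℝ)‖ := (Real.norm_of_nonneg (by linarith)).symm
        _ ≤ ‖((1 / (n : ℝ), (n : ℝ)) : ℝ × ℝ)‖ := by
          rw [Prod.norm_def]; exact le_max_right _ _
        _ ≤ M := this
    have : M < (n : ℝ) := lt_of_le_of_lt (le_max_left M 1) hn
    linarith
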